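/- arXiv:0710.1324 — 7 statements merged into one kernel-verified Lean document; each statement's English description precedes it below -/
import Mathlib

section
/- For any positive integer k, the sum over j from 1 to k-1 of 1/sin²(πj/k) equals (k²-1)/3. -/
/-!
Let `ζ = exp (2πi / k)` and `P z = ∑_{m<k} m zᵐ`. For a `k`-th root of unity `z ≠ 1` one has
`(z - 1) P z = k`, and `‖ζʲ - 1‖ = 2 |sin (πj/k)|`, so `1 / sin² (πj/k) = 4 ‖P ζʲ‖² / k²` for
`0 < j < k`. Summing over all `j < k` is Parseval's identity for the discrete Fourier transform of
`m ↦ m`, giving `k ∑ m²`; removing the term `j = 0`, which is `(∑ m)²`, leaves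
`k ∑ m² - (∑ m)² = k² (k² - 1) / 12`.
-/

open Real Finset ComplexConjugate

section CommRing

variable {R : Type*} [CommRing R]

theorem sub_one_mul_sum_range_natCast_mul_pow (z : R) (n : ℕ) :
    (z - 1) * ∑ m ∈ range n, (m : R) * z ^ m = (n - 1) * z ^ n - ∑ m ∈ range n, z ^ m + 1 := by
  induction n with
  | zero => simp
  | succ n ih =>
    rw [sum_range_succ, sum_range_succ (fun m => z ^ m), mul_add, ih]
    push_cast
    ring

theorem sum_range_natCast_mul_two (n : ℕ) : (∑ i ∈ range n, (i : R)) * 2 = n * (n - 1) := by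
  induction n with
  | zero => simp
  | succ n ih =>
    rw [sum_range_succ, add_mul, ih]
    push_cast
    ring

theorem sum_range_natCast_sq_mul_six (n : ℕ) :
    (∑ i ∈ range n, (i : R) ^ 2) * 6 = n * (n - 1) * (2 * n - 1) := by
  induction n with
  | zero => simp
  | succ n ih =>
    rw [sum_range_succ, add_mul, ih]
    push_cast
    ring

variable [IsDomain R] {z : R} {n : ℕ}

theorem geom_sum_eq_zero_of_pow_eq_one (hz : z ^ n = 1) (h1 : z ≠ 1) :
    ∑ i ∈ range n, z ^ i = 0 := by
  have h := geom_sum_mul z n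
  rw [hz, sub_self] at h
  exact (mul_eq_zero.mp h).resolve_right (sub_ne_zero.mpr h1)

theorem sub_one_mul_sum_range_natCast_mul_pow_of_pow_eq_one (hz : z ^ n = 1) (h1 : z ≠ 1) :
    (z - 1) * ∑ m ∈ range n, (m : R) * z ^ m = n := by
  rw [sub_one_mul_sum_range_natCast_mul_pow, hz, geom_sum_eq_zero_of_pow_eq_one hz h1]
  ring

end CommRing

theorem IsPrimitiveRoot.sum_range_pow_mul_inv_pow {K : Type*} [Field K] {ζ : K} {k : ℕ}
    (hζ : IsPrimitiveRoot ζ k) {m n : ℕ} (hm : m < k) (hn : n < k) :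
    ∑ j ∈ range k, (ζ ^ m * (ζ ^ n)⁻¹) ^ j = if m = n then (k : K) else 0 := by
  have hζn : ζ ^ n ≠ 0 := pow_ne_zero n (hζ.ne_zero (by omega))
  split_ifs with hmn
  · simp [hmn, hζn]
  · refine geom_sum_eq_zero_of_pow_eq_one ?_ ?_
    · rw [mul_pow, inv_pow, pow_right_comm, pow_right_comm ζ n, hζ.pow_eq_one, one_pow, one_pow,
        inv_one, mul_one]
    · rw [Ne, mul_inv_eq_one₀ hζn]
      exact fun h => hmn (hζ.pow_inj hm hn h)

theorem IsPrimitiveRoot.sum_range_sq_norm_sum_range_mul_pow {ζ : ℂ} {k : ℕ}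
    (hζ : IsPrimitiveRoot ζ k) (c : ℕ → ℂ) :
    ∑ j ∈ range k, ‖∑ m ∈ range k, c m * (ζ ^ j) ^ m‖ ^ 2 = k * ∑ m ∈ range k, ‖c m‖ ^ 2 := by
  rcases k.eq_zero_or_pos with rfl | hk
  · simp
  have hconj : conj ζ = ζ⁻¹ := by
    rw [Complex.inv_def, Complex.normSq_eq_norm_sq, hζ.norm'_eq_one hk.ne']
    simp
  apply Complex.ofReal_injective
  push_cast
  simp_rw [← Complex.mul_conj']
  calc ∑ j ∈ range k, (∑ m ∈ range k, c m * (ζ ^ j) ^ m) * conj (∑ n ∈ range k, c n * (ζ ^ j) ^ n)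
      = ∑ m ∈ range k, ∑ n ∈ range k,
          c m * conj (c n) * ∑ j ∈ range k, (ζ ^ m * (ζ ^ n)⁻¹) ^ j := by
        simp_rw [map_sum, map_mul, map_pow, hconj, sum_mul_sum, mul_sum]
        rw [sum_comm]
        refine sum_congr rfl fun m _ => ?_
        rw [sum_comm]
        exact sum_congr rfl fun n _ => sum_congr rfl fun j _ => by ring
    _ = ∑ m ∈ range k, c m * conj (c m) * k := by
        refine sum_congr rfl fun m hm => ?_
        rw [sum_congr rfl fun n hn => by
          rw [hζ.sum_range_pow_mul_inv_pow (mem_range.mp hm) (mem_range.mp hn)]]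
        simp [hm]
    _ = k * ∑ m ∈ range k, c m * conj (c m) := by
        rw [mul_sum]
        exact sum_congr rfl fun m _ => mul_comm _ _

theorem sq_norm_exp_two_pi_I_div_pow_sub_one (k j : ℕ) :
    ‖Complex.exp (2 * π * Complex.I / k) ^ j - 1‖ ^ 2 = 4 * sin (π * j / k) ^ 2 := by
  rw [← Complex.exp_nat_mul,
    show (j : ℂ) * (2 * π * Complex.I / k) = Complex.I * ((2 * π * j / k : ℝ) : ℂ) by
      push_cast; ring,
    Complex.norm_exp_I_mul_ofReal_sub_one, norm_mul, mul_pow, Real.norm_eq_abs, sq_abs,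
    show 2 * π * j / k / 2 = π * j / k by ring]
  norm_num

theorem one_div_sin_sq_eq_sq_norm_sum_range_natCast_mul_pow {k j : ℕ} (hj0 : j ≠ 0)
    (hjk : j < k) :
    1 / sin (π * j / k) ^ 2
      = 4 / k ^ 2 * ‖∑ m ∈ range k, (m : ℂ) * (Complex.exp (2 * π * Complex.I / k) ^ j) ^ m‖ ^ 2 := by
  have hζ := Complex.isPrimitiveRoot_exp k (by omega)
  have hζj : (Complex.exp (2 * π * Complex.I / k) ^ j) ^ k = 1 := by
    rw [pow_right_comm, hζ.pow_eq_one, one_pow]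
  have hkey := congrArg (‖·‖ ^ 2) <|
    sub_one_mul_sum_range_natCast_mul_pow_of_pow_eq_one hζj (hζ.pow_ne_one_of_pos_of_lt hj0 hjk)
  simp only [norm_mul, mul_pow, Complex.norm_natCast] at hkey
  rw [sq_norm_exp_two_pi_I_div_pow_sub_one] at hkey
  have hk : (k : ℝ) ≠ 0 := by exact_mod_cast (show k ≠ 0 by omega)
  have hsin : sin (π * j / k) ≠ 0 := by
    rintro h
    rw [h, zero_pow two_ne_zero, mul_zero, zero_mul] at hkey
    exact hk (pow_eq_zero_iff two_ne_zero |>.mp hkey.symm)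
  field_simp
  linear_combination -hkey

theorem sum_inv_sin_sq (k : ℕ) (hk : 0 < k) :
    ∑ j ∈ Finset.Ico 1 k, (1 : ℝ) / (Real.sin (π * j / k)) ^ 2
      = ((k : ℝ) ^ 2 - 1) / 3 := by
  set P : ℕ → ℝ := fun j =>
    ‖∑ m ∈ range k, (m : ℂ) * (Complex.exp (2 * π * Complex.I / k) ^ j) ^ m‖ ^ 2
  have hparseval : ∑ j ∈ range k, P j = k * ∑ m ∈ range k, (m : ℝ) ^ 2 := by
    simpa using (Complex.isPrimitiveRoot_exp k hk.ne').sum_range_sq_norm_sum_range_mul_pow (↑)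
  have hP0 : P 0 = (∑ m ∈ range k, (m : ℝ)) ^ 2 := by
    simp only [P, pow_zero, one_pow, mul_one]
    rw [← Nat.cast_sum, Complex.norm_natCast, Nat.cast_sum]
  rw [sum_range_eq_add_Ico _ hk, hP0] at hparseval
  rw [sum_congr rfl fun j hj => one_div_sin_sq_eq_sq_norm_sum_range_natCast_mul_pow
      (Nat.one_le_iff_ne_zero.mp (mem_Ico.mp hj).1) (mem_Ico.mp hj).2,
    ← mul_sum, eq_sub_of_add_eq' hparseval,
    eq_div_of_mul_eq two_ne_zero (sum_range_natCast_mul_two (R := ℝ) k),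
    eq_div_of_mul_eq (by norm_num) (sum_range_natCast_sq_mul_six (R := ℝ) k)]
  field_simp
  ring
end

section
/- For any positive integer k, the sum over j from 1 to k-1 of 1/(4 sin²(πj/k)) equals (k²-1)/12. -/
/-!
Let `ζ = exp (2πi/k)`. Then `|ζ^j - 1| = 2 sin (πj/k)`, and for `0 < j < k` the sum
`G j = ∑_{m<k} m ζ^{jm}` satisfies `(ζ^j - 1) G j = k`, so `1 / (4 sin² (πj/k)) = |G j|² / k²`.
Parseval's identity for the discrete Fourier transform gives `∑_{j<k} |G j|² = k ∑_{m<k} m²`;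
removing `|G 0|² = (∑_{m<k} m)²` leaves `k² (k² - 1) / 12`.
-/

open Real Finset

lemma sub_one_mul_sum_range_mul_pow {R : Type*} [CommRing R] (x : R) (n : ℕ) :
    (x - 1) * ∑ m ∈ range n, (m : R) * x ^ m = n * x ^ n - ∑ m ∈ range n, x ^ (m + 1) := by
  induction n with
  | zero => simp
  | succ n ih =>
    rw [sum_range_succ, sum_range_succ, mul_add, ih]
    push_cast
    ring

lemma geom_sum_eq_zero_of_pow_eq_one_s1 {R : Type*} [CommRing R] [IsDomain R] {x : R} {n : ℕ}
    (hx : x ^ n = 1) (hx1 : x ≠ 1) : ∑ m ∈ range n, x ^ m = 0 := by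
  have h := geom_sum_mul x n
  rw [hx, sub_self] at h
  exact (mul_eq_zero.mp h).resolve_right (sub_ne_zero.mpr hx1)

lemma sub_one_mul_sum_range_mul_pow_of_pow_eq_one {R : Type*} [CommRing R] [IsDomain R]
    {x : R} {n : ℕ} (hx : x ^ n = 1) (hx1 : x ≠ 1) :
    (x - 1) * ∑ m ∈ range n, (m : R) * x ^ m = n := by
  simp_rw [sub_one_mul_sum_range_mul_pow, pow_succ, ← sum_mul,
    geom_sum_eq_zero_of_pow_eq_one_s1 hx hx1, hx]
  ring

lemma two_mul_sum_range_natCast {R : Type*} [CommRing R] (n : ℕ) :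
    2 * ∑ m ∈ range n, (m : R) = n * (n - 1) := by
  induction n with
  | zero => simp
  | succ n ih =>
    rw [sum_range_succ, mul_add, ih]
    push_cast
    ring

lemma six_mul_sum_range_natCast_sq {R : Type*} [CommRing R] (n : ℕ) :
    6 * ∑ m ∈ range n, (m : R) ^ 2 = n * (n - 1) * (2 * n - 1) := by
  induction n with
  | zero => simp
  | succ n ih =>
    rw [sum_range_succ, mul_add, ih]
    push_cast
    ring

lemma IsPrimitiveRoot.sum_pow_div_pow_pow {K : Type*} [Field K] {ζ : K} {k m n : ℕ}
    (hζ : IsPrimitiveRoot ζ k) (hm : m < k) (hn : n < k) :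
    ∑ j ∈ range k, (ζ ^ m / ζ ^ n) ^ j = if m = n then (k : K) else 0 := by
  split_ifs with hmn
  · subst hmn
    simp [div_self (pow_ne_zero m (hζ.ne_zero (by omega)))]
  · refine geom_sum_eq_zero_of_pow_eq_one_s1 ?_ ?_
    · rw [div_pow, ← pow_mul, ← pow_mul, pow_mul', pow_mul' ζ n, hζ.pow_eq_one, one_pow,
        one_pow, div_one]
    · rw [Ne, div_eq_one_iff_eq (pow_ne_zero n (hζ.ne_zero (by omega)))]
      exact fun h => hmn (hζ.pow_inj hm hn h)

namespace Complex

lemma normSq_exp_mul_I_sub_one (θ : ℝ) :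
    normSq (exp (θ * I) - 1) = 4 * Real.sin (θ / 2) ^ 2 := by
  have h : exp (θ * I) - 1 = ((Real.cos θ - 1 : ℝ) : ℂ) + (Real.sin θ : ℝ) * I := by
    rw [exp_mul_I]
    push_cast
    ring
  rw [h, normSq_add_mul_I]
  conv_lhs => rw [← add_halves θ, ← two_mul, Real.cos_two_mul, Real.sin_two_mul]
  linear_combination (4 * Real.cos (θ / 2) ^ 2 - 4) * Real.sin_sq_add_cos_sq (θ / 2)

lemma normSq_exp_two_pi_mul_I_div_pow_sub_one (k j : ℕ) :
    normSq (exp (2 * π * I / k) ^ j - 1) = 4 * Real.sin (π * j / k) ^ 2 := by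
  rw [← exp_nat_mul, show (j : ℂ) * (2 * π * I / k) = ((2 * π * j / k : ℝ) : ℂ) * I by
    push_cast; ring, normSq_exp_mul_I_sub_one]
  ring_nf

lemma normSq_sum_range_mul_pow_of_pow_eq_one {x : ℂ} {n : ℕ} (hx : x ^ n = 1) (hx1 : x ≠ 1) :
    normSq (∑ m ∈ range n, (m : ℂ) * x ^ m) = n ^ 2 / normSq (x - 1) := by
  have h := congrArg normSq (sub_one_mul_sum_range_mul_pow_of_pow_eq_one hx hx1)
  rw [normSq_mul, normSq_natCast] at h
  rw [eq_div_iff (normSq_pos.mpr (sub_ne_zero.mpr hx1)).ne']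
  linear_combination h

end Complex

namespace IsPrimitiveRoot

variable {ζ : ℂ} {k : ℕ}

open ComplexConjugate in
lemma sum_normSq_sum_mul_pow (hζ : IsPrimitiveRoot ζ k) (a : ℕ → ℂ) :
    ∑ j ∈ range k, Complex.normSq (∑ m ∈ range k, a m * (ζ ^ j) ^ m)
      = k * ∑ m ∈ range k, Complex.normSq (a m) := by
  rcases k.eq_zero_or_pos with rfl | hk
  · simp
  have hconj (j n : ℕ) : conj ((ζ ^ j) ^ n) = (ζ ^ n)⁻¹ ^ j := by
    rw [map_pow, map_pow, ← Complex.inv_eq_conj (hζ.norm'_eq_one hk.ne')]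
    ring
  have hterm (m n : ℕ) : ∑ j ∈ range k, a m * (ζ ^ j) ^ m * conj (a n * (ζ ^ j) ^ n)
      = a m * conj (a n) * ∑ j ∈ range k, (ζ ^ m / ζ ^ n) ^ j := by
    rw [mul_sum]
    refine sum_congr rfl fun j _ => ?_
    rw [map_mul, hconj, ← pow_mul', pow_mul, div_eq_mul_inv, mul_pow]
    ring
  apply Complex.ofReal_injective
  push_cast
  simp_rw [← Complex.mul_conj, map_sum, sum_mul_sum]
  rw [sum_comm, mul_sum]
  refine sum_congr rfl fun m hm => ?_
  rw [sum_comm, sum_congr rfl fun n hn => by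
    rw [hterm, hζ.sum_pow_div_pow_pow (mem_range.mp hm) (mem_range.mp hn), mul_ite, mul_zero]]
  rw [sum_ite_eq, if_pos hm, mul_comm]

lemma sum_Ico_normSq_sum_range_natCast_mul_pow (hζ : IsPrimitiveRoot ζ k) (hk : 0 < k) :
    ∑ j ∈ Ico 1 k, Complex.normSq (∑ m ∈ range k, (m : ℂ) * (ζ ^ j) ^ m)
      = (k : ℝ) ^ 2 * ((k : ℝ) ^ 2 - 1) / 12 := by
  have hparseval := hζ.sum_normSq_sum_mul_pow (fun m => m)
  have hsum : ∑ m ∈ range k, (m : ℂ) = ((∑ m ∈ range k, (m : ℝ) : ℝ) : ℂ) := by push_cast; rfl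
  simp only [Complex.normSq_natCast, ← sq] at hparseval
  rw [sum_range_eq_add_Ico _ hk, pow_zero] at hparseval
  simp only [one_pow, mul_one, hsum, Complex.normSq_ofReal] at hparseval
  linear_combination hparseval + k / 6 * six_mul_sum_range_natCast_sq (R := ℝ) k
    - (2 * ∑ m ∈ range k, (m : ℝ) + k * (k - 1)) / 4 * two_mul_sum_range_natCast (R := ℝ) k

end IsPrimitiveRoot

theorem sum_inv_four_sin_sq (k : ℕ) (hk : 0 < k) :
    ∑ j ∈ Finset.Ico 1 k, (1 : ℝ) / (4 * (Real.sin (π * j / k)) ^ 2)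
      = ((k : ℝ) ^ 2 - 1) / 12 := by
  set ζ := Complex.exp (2 * π * Complex.I / k)
  have hζ : IsPrimitiveRoot ζ k := Complex.isPrimitiveRoot_exp k hk.ne'
  have hterm : ∀ j ∈ Ico 1 k, 1 / (4 * sin (π * j / k) ^ 2)
      = Complex.normSq (∑ m ∈ range k, (m : ℂ) * (ζ ^ j) ^ m) / k ^ 2 := by
    intro j hj
    obtain ⟨hj0, hjk⟩ := mem_Ico.mp hj
    have hroot : (ζ ^ j) ^ k = 1 := by rw [pow_right_comm, hζ.pow_eq_one, one_pow]
    rw [← show Complex.normSq (ζ ^ j - 1) = _ from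
        Complex.normSq_exp_two_pi_mul_I_div_pow_sub_one k j,
      Complex.normSq_sum_range_mul_pow_of_pow_eq_one hroot
        (hζ.pow_ne_one_of_pos_of_lt (by omega) hjk)]
    field_simp
  rw [sum_congr rfl hterm, ← sum_div, hζ.sum_Ico_normSq_sum_range_natCast_mul_pow hk]
  field_simp
end

section
/- For a > 0, b a natural number, ε > 0, and N ≥ (b+1)/2, as t → 0⁺ one has ∫₀^ε e^{-x²a²/t} x^b dx = Γ((b+1)/2)/(2a^{b+1}) · t^{(b+1)/2} + O((t/(ε²a²))^N). -/
/-!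
Splitting `∫₀^ε = ∫₀^∞ - ∫_ε^∞`, the integral over `(0, ∞)` is exactly the Gamma-function main
term, so the error is minus the tail `∫_ε^∞ e^{-c x²} x^b` with `c = a²/t = 1/(ε² u)`, where
`u = t/(ε²a²)`. For `u ≤ 1` and `x > ε`, `c x² = (c - ε⁻²) x² + ε⁻² x² ≥ u⁻¹ - 1 + ε⁻² x²`, so the
tail is at most `e · e^{-1/u}` times a constant, and `e^{-1/u} ≤ n! uⁿ` for every `n`.
-/

open Real MeasureTheory Filter Asymptotics Topology Set
open scoped Nat

section GaussianMoment

variable (b : ℕ) {c : ℝ}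

lemma integrableOn_exp_neg_mul_sq_mul_pow (hc : 0 < c) :
    IntegrableOn (fun x : ℝ => exp (-c * x ^ 2) * x ^ b) (Ioi 0) := by
  simpa [mul_comm, rpow_natCast] using
    integrableOn_rpow_mul_exp_neg_mul_sq hc (s := b) (by linarith [b.cast_nonneg (α := ℝ)])

lemma integral_exp_neg_mul_sq_mul_pow_Ioi (hc : 0 < c) :
    ∫ x in Ioi 0, exp (-c * x ^ 2) * x ^ b =
      Gamma (((b : ℝ) + 1) / 2) / 2 * c ^ (-(((b : ℝ) + 1) / 2)) := by
  have h := integral_rpow_mul_exp_neg_mul_rpow two_pos (q := b)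
    (by linarith [b.cast_nonneg (α := ℝ)]) hc
  simp only [rpow_two, rpow_natCast] at h
  rw [integral_congr_ae (ae_of_all _ fun x => mul_comm _ _), h, neg_div]
  ring

lemma intervalIntegral_exp_neg_mul_sq_mul_pow_sub (hc : 0 < c) {ε : ℝ} (hε : 0 ≤ ε) :
    (∫ x in (0 : ℝ)..ε, exp (-c * x ^ 2) * x ^ b) -
        Gamma (((b : ℝ) + 1) / 2) / 2 * c ^ (-(((b : ℝ) + 1) / 2)) =
      -∫ x in Ioi ε, exp (-c * x ^ 2) * x ^ b := by
  rw [← integral_exp_neg_mul_sq_mul_pow_Ioi b hc,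
    ← intervalIntegral.integral_Ioi_sub_Ioi (integrableOn_exp_neg_mul_sq_mul_pow b hc) hε]
  ring

lemma integral_exp_neg_mul_sq_mul_pow_Ioi_nonneg {ε : ℝ} (hε : 0 ≤ ε) :
    0 ≤ ∫ x in Ioi ε, exp (-c * x ^ 2) * x ^ b :=
  setIntegral_nonneg measurableSet_Ioi fun x hx => by
    have : 0 ≤ x := hε.trans (le_of_lt hx)
    positivity

lemma integral_exp_neg_mul_sq_mul_pow_Ioi_le {d ε : ℝ} (hd : 0 < d) (hdc : d ≤ c) (hε : 0 ≤ ε) :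
    ∫ x in Ioi ε, exp (-c * x ^ 2) * x ^ b ≤
      exp (-(c - d) * ε ^ 2) * ∫ x in Ioi ε, exp (-d * x ^ 2) * x ^ b := by
  rw [← integral_const_mul]
  refine setIntegral_mono_on
    ((integrableOn_exp_neg_mul_sq_mul_pow b (hd.trans_le hdc)).mono_set (Ioi_subset_Ioi hε))
    (((integrableOn_exp_neg_mul_sq_mul_pow b hd).mono_set (Ioi_subset_Ioi hε)).const_mul _)
    measurableSet_Ioi fun x hx => ?_
  have hεx : ε ^ 2 ≤ x ^ 2 := pow_le_pow_left₀ hε (le_of_lt hx) 2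
  have hx : 0 ≤ x := hε.trans (le_of_lt hx)
  rw [← mul_assoc, ← exp_add]
  gcongr
  nlinarith

lemma integral_exp_neg_mul_sq_mul_pow_Ioi_le_exp_neg {ε : ℝ} (hε : 0 < ε) (hcε : 1 ≤ c * ε ^ 2) :
    ∫ x in Ioi ε, exp (-c * x ^ 2) * x ^ b ≤
      exp 1 * exp (-(c * ε ^ 2)) * ∫ x in Ioi ε, exp (-(ε ^ 2)⁻¹ * x ^ 2) * x ^ b := by
  have hdc : (ε ^ 2)⁻¹ ≤ c := by rwa [inv_le_iff_one_le_mul₀ (by positivity)]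
  have hexponent : -(c - (ε ^ 2)⁻¹) * ε ^ 2 = 1 + -(c * ε ^ 2) := by
    field_simp
    ring
  rw [← exp_add, ← hexponent]
  exact integral_exp_neg_mul_sq_mul_pow_Ioi_le b (by positivity) hdc hε.le

end GaussianMoment

lemma sq_div_rpow_neg_succ_div_two {a t : ℝ} (ha : 0 < a) (ht : 0 < t) (b : ℕ) :
    (a ^ 2 / t) ^ (-(((b : ℝ) + 1) / 2)) = t ^ (((b : ℝ) + 1) / 2) / a ^ (b + 1) := by
  rw [rpow_neg (by positivity), ← inv_rpow (by positivity), inv_div, div_rpow ht.le (by positivity),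
    ← rpow_natCast a 2, ← rpow_mul ha.le, ← rpow_natCast a (b + 1)]
  push_cast
  ring_nf

lemma exp_neg_inv_le_factorial_mul_pow (n : ℕ) {u : ℝ} (hu : 0 < u) :
    exp (-u⁻¹) ≤ n ! * u ^ n := by
  rw [exp_neg]
  refine inv_le_of_inv_le₀ (by positivity) ?_
  simpa [inv_pow, div_eq_mul_inv, mul_inv, mul_comm] using
    pow_div_factorial_le_exp _ (inv_nonneg.2 hu.le) n

lemma exp_neg_inv_le_ceil_factorial_mul_rpow (N : ℝ) {u : ℝ} (hu₀ : 0 < u) (hu₁ : u ≤ 1) :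
    exp (-u⁻¹) ≤ ⌈N⌉₊ ! * u ^ N :=
  calc exp (-u⁻¹) ≤ ⌈N⌉₊ ! * u ^ ⌈N⌉₊ := exp_neg_inv_le_factorial_mul_pow _ hu₀
    _ ≤ ⌈N⌉₊ ! * u ^ N := by
      gcongr
      rw [← rpow_natCast]
      exact rpow_le_rpow_of_exponent_ge hu₀ hu₁ (Nat.le_ceil N)

theorem integral_gaussian_moment_asymptotics_general
    (a : ℝ) (ha : 0 < a) (b : ℕ) (ε : ℝ) (hε : 0 < ε) (N : ℝ) :
    (fun t : ℝ =>
        (∫ x in (0:ℝ)..ε, Real.exp (-x ^ 2 * a ^ 2 / t) * x ^ b) -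
          Real.Gamma (((b : ℝ) + 1) / 2) / (2 * a ^ (b + 1)) * t ^ (((b : ℝ) + 1) / 2))
      =O[𝓝[>] 0] fun t : ℝ => (t / (ε ^ 2 * a ^ 2)) ^ N := by
  set K := ∫ x in Ioi ε, exp (-(ε ^ 2)⁻¹ * x ^ 2) * x ^ b
  refine IsBigO.of_bound (exp 1 * ⌈N⌉₊ ! * K) ?_
  filter_upwards [Ioo_mem_nhdsGT (by positivity : (0 : ℝ) < ε ^ 2 * a ^ 2)] with t ⟨ht₀, ht₁⟩
  set u := t / (ε ^ 2 * a ^ 2)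
  have hu₀ : 0 < u := by positivity
  have hu₁ : u ≤ 1 := (div_le_one (by positivity)).2 ht₁.le
  have hcε : a ^ 2 / t * ε ^ 2 = u⁻¹ := by
    simp only [u]
    field_simp
  have herror : (∫ x in (0 : ℝ)..ε, exp (-x ^ 2 * a ^ 2 / t) * x ^ b) -
      Gamma (((b : ℝ) + 1) / 2) / (2 * a ^ (b + 1)) * t ^ (((b : ℝ) + 1) / 2) =
      -∫ x in Ioi ε, exp (-(a ^ 2 / t) * x ^ 2) * x ^ b := by
    rw [← intervalIntegral_exp_neg_mul_sq_mul_pow_sub b (by positivity) hε.le,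
      sq_div_rpow_neg_succ_div_two ha ht₀]
    have hexponent : ∀ x : ℝ, -x ^ 2 * a ^ 2 / t = -(a ^ 2 / t) * x ^ 2 := fun x => by ring
    simp only [hexponent]
    ring
  rw [herror, norm_neg, norm_of_nonneg (integral_exp_neg_mul_sq_mul_pow_Ioi_nonneg b hε.le),
    norm_of_nonneg (rpow_nonneg hu₀.le N)]
  have hK : 0 ≤ K := integral_exp_neg_mul_sq_mul_pow_Ioi_nonneg b hε.le
  calc _ ≤ exp 1 * exp (-u⁻¹) * K := by
        rw [← hcε]
        exact integral_exp_neg_mul_sq_mul_pow_Ioi_le_exp_neg b hε (hcε ▸ (one_le_inv₀ hu₀).2 hu₁)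
    _ ≤ exp 1 * (⌈N⌉₊ ! * u ^ N) * K := by
        gcongr
        exact exp_neg_inv_le_ceil_factorial_mul_rpow N hu₀ hu₁
    _ = exp 1 * ⌈N⌉₊ ! * K * u ^ N := by ring

theorem integral_gaussian_moment_asymptotics
    (a : ℝ) (ha : 0 < a) (b : ℕ) (ε : ℝ) (hε : 0 < ε) (N : ℝ)
    (hN : ((b : ℝ) + 1) / 2 ≤ N) :
    (fun t : ℝ =>
        (∫ x in (0:ℝ)..ε, Real.exp (-x ^ 2 * a ^ 2 / t) * x ^ b) -
          Real.Gamma (((b : ℝ) + 1) / 2) / (2 * a ^ (b + 1)) * t ^ (((b : ℝ) + 1) / 2))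
      =O[𝓝[>] 0] fun t : ℝ => (t / (ε ^ 2 * a ^ 2)) ^ N :=
  integral_gaussian_moment_asymptotics_general a ha b ε hε N
end

section
/- With I₁(t, ε) = ∫₀^ε ∫₀^π e^{-(r²/(2t))(1-cos θ)} dθ · 2r dr, the change of variables cos θ = (x-s)/(x+s) with s = t/ε² yields I₁(t, ε) = ε√t · F(t/ε²), where F(s) = ∫₀^∞ (1 - e^{-1/(x+s)})/√x dx. -/
open Real MeasureTheory intervalIntegral
open Set

/-!
After swapping the order of integration, the radial integral is elementary:
`∫₀^ε e^{-a r²} 2r dr = (1 - e^{-a ε²}) / a` with `a = (1 - cos θ) / (2t)`.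
On the other side, `x = s (1 + cos θ) / (1 - cos θ)` maps `(0, π)` bijectively onto `(0, ∞)`,
with `x + s = 2s / (1 - cos θ)` and `|dx| / √x = 2√s dθ / (1 - cos θ)`, so `F(s)` becomes the
same `θ`-integral once `s = t / ε²`.
-/

theorem intervalIntegral_integral_swap_of_continuous {E : Type*} [NormedAddCommGroup E]
    [NormedSpace ℝ E] {f : ℝ → ℝ → E} (hf : Continuous (Function.uncurry f)) {a b c d : ℝ}
    (hab : a ≤ b) (hcd : c ≤ d) :
    ∫ x in a..b, ∫ y in c..d, f x y = ∫ y in c..d, ∫ x in a..b, f x y := by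
  simp only [intervalIntegral.integral_of_le hab, intervalIntegral.integral_of_le hcd]
  refine integral_integral_swap ?_
  rw [Measure.prod_restrict]
  exact (hf.continuousOn.integrableOn_compact (isCompact_Icc.prod isCompact_Icc)).mono_set
    (prod_mono Ioc_subset_Icc_self Ioc_subset_Icc_self)

theorem integral_exp_neg_mul_sq_mul_two_mul {a : ℝ} (ha : a ≠ 0) (ε : ℝ) :
    ∫ r in (0:ℝ)..ε, exp (-a * r ^ 2) * (2 * r) = (1 - exp (-a * ε ^ 2)) / a := by
  have hderiv : ∀ r : ℝ, HasDerivAt (fun r => -a⁻¹ * exp (-a * r ^ 2))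
      (exp (-a * r ^ 2) * (2 * r)) r := fun r =>
    (((hasDerivAt_pow 2 r).const_mul (-a)).exp.const_mul (-a⁻¹)).congr_deriv (by field_simp; ring)
  rw [integral_eq_sub_of_hasDerivAt (fun r _ => hderiv r)
    ((by fun_prop : Continuous fun r : ℝ => exp (-a * r ^ 2) * (2 * r)).intervalIntegrable _ _)]
  field_simp
  simp only [ne_eq, OfNat.ofNat_ne_zero, not_false_eq_true, zero_pow, mul_zero, neg_zero, exp_zero]
  ring

/-- The substitution `cos θ = (x - s) / (x + s)`, solved for `x`. -/
noncomputable def cosSubst (s θ : ℝ) : ℝ := s * (1 + cos θ) / (1 - cos θ)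

section cosSubst

variable {s θ : ℝ}

theorem one_sub_cos_pos_of_mem_Ioo (hθ : θ ∈ Ioo 0 π) : 0 < 1 - cos θ := by
  linarith [(mapsTo_cos_Ioo hθ).2]

theorem cosSubst_add_self (h : cos θ ≠ 1) : cosSubst s θ + s = 2 * s / (1 - cos θ) := by
  have : 1 - cos θ ≠ 0 := sub_ne_zero.2 h.symm
  unfold cosSubst
  field_simp
  ring

theorem hasDerivAt_cosSubst (h : cos θ ≠ 1) :
    HasDerivAt (cosSubst s) (-(2 * s * sin θ) / (1 - cos θ) ^ 2) θ := by
  have : 1 - cos θ ≠ 0 := sub_ne_zero.2 h.symm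
  refine ((((hasDerivAt_cos θ).const_add 1).const_mul s).div ((hasDerivAt_cos θ).const_sub 1)
    this).congr_deriv ?_
  field_simp
  ring

theorem sqrt_cosSubst (hs : 0 ≤ s) (hθ : θ ∈ Ioo 0 π) :
    √(cosSubst s θ) = √s * sin θ / (1 - cos θ) := by
  have hc := one_sub_cos_pos_of_mem_Ioo hθ
  have hsin := sin_pos_of_pos_of_lt_pi hθ.1 hθ.2
  have : cosSubst s θ = (√s * sin θ / (1 - cos θ)) ^ 2 := by
    rw [div_pow, mul_pow, sq_sqrt hs, sin_sq, cosSubst]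
    field_simp
    ring
  rw [this, sqrt_sq (by positivity)]

theorem injOn_cosSubst (hs : s ≠ 0) : InjOn (cosSubst s) (Ioo 0 π) := by
  intro a ha b hb hab
  have := congrArg (· + s) hab
  simp only [cosSubst_add_self (mapsTo_cos_Ioo ha).2.ne,
    cosSubst_add_self (mapsTo_cos_Ioo hb).2.ne] at this
  refine injOn_cos (Ioo_subset_Icc_self ha) (Ioo_subset_Icc_self hb) ?_
  have hca := one_sub_cos_pos_of_mem_Ioo ha
  have hcb := one_sub_cos_pos_of_mem_Ioo hb
  field_simp at this
  linarith

theorem image_cosSubst_Ioo (hs : 0 < s) : cosSubst s '' Ioo 0 π = Ioi 0 := by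
  ext x
  constructor
  · rintro ⟨θ, hθ, rfl⟩
    exact div_pos (mul_pos hs (by linarith [(mapsTo_cos_Ioo hθ).1]))
      (one_sub_cos_pos_of_mem_Ioo hθ)
  · intro hx
    have hxs : 0 < x + s := by linarith [mem_Ioi.1 hx]
    have hc : (x - s) / (x + s) ∈ Ioo (-1) 1 := by
      constructor
      · rw [lt_div_iff₀ hxs]; linarith [mem_Ioi.1 hx]
      · rw [div_lt_one hxs]; linarith
    refine ⟨arccos ((x - s) / (x + s)), cosPartialHomeomorph.map_target hc, ?_⟩
    rw [cosSubst, cos_arccos hc.1.le hc.2.le]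
    field_simp
    rw [div_eq_iff (by linarith)]
    ring

end cosSubst

theorem integral_Ioi_comp_add_div_sqrt {s : ℝ} (hs : 0 < s) (g : ℝ → ℝ) :
    ∫ x in Ioi 0, g (x + s) / √x
      = ∫ θ in Ioo 0 π, 2 * √s / (1 - cos θ) * g (2 * s / (1 - cos θ)) := by
  rw [← image_cosSubst_Ioo hs, integral_image_eq_integral_abs_deriv_smul measurableSet_Ioo
    (fun θ hθ => (hasDerivAt_cosSubst (mapsTo_cos_Ioo hθ).2.ne).hasDerivWithinAt)
    (injOn_cosSubst hs.ne')]
  refine setIntegral_congr_fun measurableSet_Ioo fun θ hθ => ?_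
  have hc := one_sub_cos_pos_of_mem_Ioo hθ
  have hsin := sin_pos_of_pos_of_lt_pi hθ.1 hθ.2
  rw [smul_eq_mul, cosSubst_add_self (mapsTo_cos_Ioo hθ).2.ne, sqrt_cosSubst hs.le hθ,
    abs_div, abs_neg, abs_of_pos (by positivity), abs_of_pos (by positivity)]
  field_simp
  rw [sq_sqrt hs.le]
  ring

theorem I1_eq_eps_sqrt_t_F (t ε : ℝ) (ht : 0 < t) (hε : 0 < ε) :
    (∫ r in (0:ℝ)..ε, (∫ θ in (0:ℝ)..π, Real.exp (-(r ^ 2 / (2 * t)) * (1 - Real.cos θ))) * (2 * r))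
      = ε * Real.sqrt t *
          ∫ x in Set.Ioi (0:ℝ), (1 - Real.exp (-1 / (x + t / ε ^ 2))) / Real.sqrt x := by
  rw [integral_Ioi_comp_add_div_sqrt (by positivity) fun y => 1 - exp (-1 / y),
    ← MeasureTheory.integral_const_mul]
  simp_rw [← intervalIntegral.integral_mul_const]
  rw [intervalIntegral_integral_swap_of_continuous (by fun_prop) hε.le pi_pos.le,
    intervalIntegral.integral_of_le pi_pos.le, integral_Ioc_eq_integral_Ioo]
  refine setIntegral_congr_fun measurableSet_Ioo fun θ hθ => ?_
  have hc := one_sub_cos_pos_of_mem_Ioo hθ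
  have hexp : ∀ r, -(r ^ 2 / (2 * t)) * (1 - cos θ) = -((1 - cos θ) / (2 * t)) * r ^ 2 :=
    fun r => by ring
  simp only [hexp]
  rw [integral_exp_neg_mul_sq_mul_two_mul (by positivity), sqrt_div' _ (by positivity),
    sqrt_sq hε.le]
  field_simp
  rw [sq_sqrt ht.le]
  ring
end

section
/- ∑_{m≥0} e^{-m(m+1)t} = (1/√(4πt)) (π + (π/4) t + O(t²)) as t → 0⁺; equivalently, √(4πt) ∑_{m≥0} e^{-m(m+1)t} - π - (π/4)t = O(t²) as t → 0⁺. -/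
open Real Filter Asymptotics Topology
open HurwitzZeta

/-!
Shifting to half-integers, `∑_{n ∈ ℤ} e^{-n(n+1)t} = e^{t/4} ∑_{n ∈ ℤ} e^{-(n+1/2)² t}`, and Poisson
summation (the functional equation of `evenKernel`) turns the right side into
`√(π/t) e^{t/4} ∑_{n ∈ ℤ} (-1)ⁿ e^{-π² n² / t}`, the last sum being `cosKernel (1/2) (π/t)`.
Halving, `√(4πt) ∑_{m ≥ 0} e^{-m(m+1)t} = π e^{t/4} cosKernel (1/2) (π/t)`. The theta factor is
`1 + O(e^{-c/t}) = 1 + O(t²)`, and `e^{t/4} = 1 + t/4 + O(t²)`.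
-/

lemma hasSum_nat_evenKernel_half {x : ℝ} (hx : 0 < x) :
    HasSum (fun m : ℕ => rexp (-π * (m + 1 / 2) ^ 2 * x)) (evenKernel (1 / 2 : ℝ) x / 2) := by
  refine ((hasSum_int_evenKernel (1 / 2) hx).nat_add_neg_add_one.div_const 2).congr_fun
    fun m => ?_
  push_cast
  ring_nf

lemma hasSum_exp_neg_nat_mul_succ {t : ℝ} (ht : 0 < t) :
    HasSum (fun m : ℕ => rexp (-((m : ℝ) * (m + 1)) * t))
      (rexp (t / 4) * evenKernel (1 / 2 : ℝ) (t / π) / 2) := by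
  rw [mul_div_assoc]
  refine ((hasSum_nat_evenKernel_half (div_pos ht pi_pos)).mul_left (rexp (t / 4))).congr_fun
    fun m => ?_
  rw [← Real.exp_add]
  congr 1
  field_simp
  ring

lemma sqrt_four_pi_mul_tsum_eq_cosKernel {t : ℝ} (ht : 0 < t) :
    √(4 * π * t) * ∑' m : ℕ, rexp (-((m : ℝ) * (m + 1)) * t) =
      π * rexp (t / 4) * cosKernel (1 / 2 : ℝ) (π / t) := by
  rw [(hasSum_exp_neg_nat_mul_succ ht).tsum_eq, evenKernel_functional_equation, one_div_div,
    ← sqrt_eq_rpow]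
  have hsqrt : √(4 * π * t) / √(t / π) = 2 * π := by
    rw [← sqrt_div' _ (div_pos ht pi_pos).le, show 4 * π * t / (t / π) = (2 * π) ^ 2 by
      field_simp; ring, sqrt_sq (by positivity)]
  calc _ = √(4 * π * t) / √(t / π) / 2 * rexp (t / 4) * cosKernel (1 / 2 : ℝ) (π / t) := by
        ring
    _ = _ := by rw [hsqrt]; ring

lemma exp_neg_div_le_factorial_mul_pow {c t : ℝ} (hc : 0 < c) (ht : 0 < t) (n : ℕ) :
    rexp (-(c / t)) ≤ n.factorial / c ^ n * t ^ n := by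
  have hpos : 0 < (c / t) ^ n / n.factorial := by positivity
  calc rexp (-(c / t)) = (rexp (c / t))⁻¹ := exp_neg _
    _ ≤ ((c / t) ^ n / n.factorial)⁻¹ :=
        inv_anti₀ hpos (pow_div_factorial_le_exp _ (div_pos hc ht).le n)
    _ = n.factorial / c ^ n * t ^ n := by
        field_simp
        rw [div_pow, div_mul_cancel₀ _ (pow_ne_zero n ht.ne')]

lemma isBigO_exp_neg_div_nhdsGT_zero {c : ℝ} (hc : 0 < c) (n : ℕ) :
    (fun t : ℝ => rexp (-(c / t))) =O[𝓝[>] 0] (· ^ n) := by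
  refine .of_bound (n.factorial / c ^ n) ?_
  filter_upwards [self_mem_nhdsWithin] with t (ht : 0 < t)
  rw [norm_of_nonneg (exp_pos _).le, norm_of_nonneg (pow_pos ht n).le]
  exact exp_neg_div_le_factorial_mul_pow hc ht n

lemma isBigO_cosKernel_div_sub_one (a : UnitAddCircle) {c : ℝ} (hc : 0 < c) (n : ℕ) :
    (fun t : ℝ => cosKernel a (c / t) - 1) =O[𝓝[>] 0] (· ^ n) := by
  obtain ⟨p, hp, hdecay⟩ := isBigO_atTop_cosKernel_sub a
  have hlim : Tendsto (fun t : ℝ => c / t) (𝓝[>] 0) atTop :=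
    tendsto_inv_nhdsGT_zero.const_mul_atTop hc
  refine (hdecay.comp_tendsto hlim).trans ?_
  simpa only [Function.comp_def, neg_mul, mul_div_assoc'] using
    isBigO_exp_neg_div_nhdsGT_zero (mul_pos hp hc) n

lemma isBigO_exp_sub_one_sub_id : (fun x : ℝ => rexp x - 1 - x) =O[𝓝 0] (· ^ 2) := by
  refine .of_bound 1 ?_
  filter_upwards [Metric.closedBall_mem_nhds (0 : ℝ) zero_lt_one] with x hx
  rw [one_mul, norm_pow]
  exact Real.norm_exp_sub_one_sub_id_le (by simpa using hx)

theorem heat_trace_legendre_asymptotics :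
    (fun t : ℝ =>
        Real.sqrt (4 * π * t) * (∑' m : ℕ, Real.exp (-((m : ℝ) * ((m : ℝ) + 1)) * t)) -
          π - (π / 4) * t)
      =O[𝓝[>] 0] fun t : ℝ => t ^ 2 := by
  have hquarter : Tendsto (fun t : ℝ => t / 4) (𝓝[>] 0) (𝓝 0) := by
    simpa using ((tendsto_id (x := 𝓝 (0 : ℝ))).div_const 4).mono_left nhdsWithin_le_nhds
  have htaylor : (fun t : ℝ => π * (rexp (t / 4) - 1 - t / 4)) =O[𝓝[>] 0] (· ^ 2) := by
    refine ((isBigO_exp_sub_one_sub_id.comp_tendsto hquarter).const_mul_left π).trans ?_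
    simpa only [Function.comp_def, div_eq_inv_mul, mul_pow] using
      (isBigO_refl (· ^ 2 : ℝ → ℝ) _).const_mul_left (4⁻¹ ^ 2)
  have hbounded : (fun t : ℝ => π * rexp (t / 4)) =O[𝓝[>] 0] (fun _ => (1 : ℝ)) :=
    ((by fun_prop : Continuous fun t : ℝ => π * rexp (t / 4)).tendsto 0).mono_left
      nhdsWithin_le_nhds |>.isBigO_one ℝ
  have htheta := hbounded.mul (isBigO_cosKernel_div_sub_one (1 / 2 : ℝ) pi_pos 2)
  simp only [one_mul] at htheta
  refine (htaylor.add htheta).congr' ?_ .rfl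
  filter_upwards [self_mem_nhdsWithin] with t (ht : 0 < t)
  rw [sqrt_four_pi_mul_tsum_eq_cosKernel ht]
  ring
end

section
/- For 0 < ε' < 1, ∫_{-1+ε'}^{1-ε'} (1/4)·(2-z²)/(1-z²)^{3/2} dz = (1/2)((1-ε')/√(1-(1-ε')²) + arcsin(1-ε')), and lim_{ε'→0⁺} [ this integral - 1/(2(π/2 - arcsin(1-ε'))) ] = π/4. -/
/-!
`F z = (z / √(1 - z²) + arcsin z) / 4` is an odd antiderivative of the integrand on `(-1, 1)`, so the
integral over `[-(1 - ε), 1 - ε]` is `2 F (1 - ε)`. Writing `1 - ε = cos θ` with `θ = arccos (1 - ε)`,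
which tends to `0⁺` with `ε`, gives `2 F (cos θ) = (cot θ + π/2 - θ) / 2`, while the subtracted term is
`1 / (2θ)`. Since `-πθ/4 ≤ cot θ - 1/θ ≤ 0` for `0 < θ < π/2`, the difference tends to `π/4`.
-/

open Real MeasureTheory Filter Topology intervalIntegral

noncomputable def antideriv (z : ℝ) : ℝ := (1 / 4) * (z / √(1 - z ^ 2) + arcsin z)

lemma one_sub_sq_pos_of_mem_Ioo {z : ℝ} (hz : z ∈ Set.Ioo (-1) 1) : 0 < 1 - z ^ 2 := by
  nlinarith [hz.1, hz.2]

lemma rpow_three_halves_eq_mul_sqrt {x : ℝ} (hx : 0 ≤ x) : x ^ ((3 : ℝ) / 2) = x * √x := by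
  rw [show (3 : ℝ) / 2 = 1 + 1 / 2 by norm_num, rpow_add' hx (by norm_num), rpow_one, sqrt_eq_rpow]

lemma hasDerivAt_antideriv {z : ℝ} (hz : z ∈ Set.Ioo (-1) 1) :
    HasDerivAt antideriv ((1 / 4) * (2 - z ^ 2) / (1 - z ^ 2) ^ ((3 : ℝ) / 2)) z := by
  have hpos := one_sub_sq_pos_of_mem_Ioo hz
  have hsqrt_pos : 0 < √(1 - z ^ 2) := sqrt_pos.2 hpos
  have hsqrt : HasDerivAt (fun z : ℝ => √(1 - z ^ 2)) (-(2 * z) / (2 * √(1 - z ^ 2))) z :=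
    ((hasDerivAt_pow 2 z).const_sub 1).sqrt hpos.ne' |>.congr_deriv (by ring)
  have hquot := (hasDerivAt_id' z).div hsqrt hsqrt_pos.ne'
  have harcsin := hasDerivAt_arcsin (by linarith [hz.1] : z ≠ -1) (by linarith [hz.2] : z ≠ 1)
  refine ((hquot.add harcsin).const_mul (1 / 4 : ℝ)).congr_deriv ?_
  rw [rpow_three_halves_eq_mul_sqrt hpos.le]
  field_simp
  rw [sq_sqrt hpos.le]
  ring

lemma antideriv_neg (z : ℝ) : antideriv (-z) = -antideriv z := by
  simp only [antideriv, neg_sq, arcsin_neg]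
  ring

lemma integral_symm_eq_two_mul_antideriv {a : ℝ} (ha : |a| < 1) :
    ∫ z in (-a)..a, (1 / 4) * (2 - z ^ 2) / (1 - z ^ 2) ^ ((3 : ℝ) / 2) = 2 * antideriv a := by
  have hsub : Set.uIcc (-a) a ⊆ Set.Ioo (-1) 1 :=
    (Set.uIcc_subset_Icc ⟨neg_le_neg (le_abs_self a), neg_le_abs a⟩
      ⟨neg_abs_le a, le_abs_self a⟩).trans (Set.Icc_subset_Ioo (neg_lt_neg ha) ha)
  have hcont : ContinuousOn (fun z : ℝ => (1 / 4) * (2 - z ^ 2) / (1 - z ^ 2) ^ ((3 : ℝ) / 2))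
      (Set.uIcc (-a) a) := by
    refine ContinuousOn.div (by fun_prop) ?_
      fun z hz => (rpow_pos_of_pos (one_sub_sq_pos_of_mem_Ioo (hsub hz)) _).ne'
    exact (continuous_const.sub (continuous_pow 2)).continuousOn.rpow_const
      fun _ _ => Or.inr (by norm_num)
  rw [integral_eq_sub_of_hasDerivAt (fun z hz => hasDerivAt_antideriv (hsub hz))
    (hcont.intervalIntegrable), antideriv_neg]
  ring

lemma antideriv_cos {θ : ℝ} (h₀ : 0 ≤ θ) (hπ : θ ≤ π) :
    antideriv (cos θ) = (1 / 4) * (cot θ + (π / 2 - θ)) := by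
  rw [antideriv, ← sin_eq_sqrt_one_sub_cos_sq h₀ hπ, ← cot_eq_cos_div_sin,
    arcsin_eq_pi_div_two_sub_arccos, arccos_cos h₀ hπ]

lemma cot_le_inv {t : ℝ} (h₀ : 0 < t) (ht : t < π / 2) : cot t ≤ t⁻¹ := by
  have hsin : 0 < sin t := sin_pos_of_pos_of_lt_pi h₀ (by linarith [pi_pos])
  have hcos : 0 < cos t := cos_pos_of_mem_Ioo ⟨by linarith, ht⟩
  have htan := le_tan h₀.le ht
  rw [tan_eq_sin_div_cos, le_div_iff₀ hcos] at htan
  rw [cot_eq_cos_div_sin, div_le_iff₀ hsin, inv_mul_eq_div, le_div_iff₀ h₀]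
  linarith

lemma neg_mul_le_cot_sub_inv {t : ℝ} (h₀ : 0 < t) (ht : t ≤ π / 2) :
    -(π / 4 * t) ≤ cot t - t⁻¹ := by
  have hsin : 2 / π * t ≤ sin t := mul_le_sin h₀.le ht
  have hsin_pos : 0 < sin t := sin_pos_of_pos_of_lt_pi h₀ (by linarith [pi_pos])
  have hnum : -(t ^ 3 / 2) ≤ t * cos t - sin t := by
    nlinarith [one_sub_sq_div_two_le_cos (x := t), sin_le h₀.le]
  have hden : t ^ 3 / 2 ≤ π / 4 * t * (t * sin t) := by
    calc t ^ 3 / 2 = π / 4 * t ^ 2 * (2 / π * t) := by field_simp; ring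
      _ ≤ π / 4 * t ^ 2 * sin t := by gcongr
      _ = π / 4 * t * (t * sin t) := by ring
  rw [cot_eq_cos_div_sin, show cos t / sin t - t⁻¹ = (t * cos t - sin t) / (t * sin t) by
    field_simp, le_div_iff₀ (by positivity)]
  linarith

lemma tendsto_cot_sub_inv_nhdsGT_zero :
    Tendsto (fun t => cot t - t⁻¹) (𝓝[>] 0) (𝓝 0) := by
  have hlower : Tendsto (fun t : ℝ => -(π / 4 * t)) (𝓝[>] 0) (𝓝 0) :=
    ((by fun_prop : Continuous fun t : ℝ => -(π / 4 * t)).tendsto' 0 0 (by simp)).mono_left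
      nhdsWithin_le_nhds
  have hmem : Set.Ioo 0 (π / 2) ∈ 𝓝[>] (0 : ℝ) := Ioo_mem_nhdsGT (by positivity)
  refine tendsto_of_tendsto_of_tendsto_of_le_of_le' hlower tendsto_const_nhds ?_ ?_
  · filter_upwards [hmem] with t ht using neg_mul_le_cot_sub_inv ht.1 ht.2.le
  · filter_upwards [hmem] with t ht using sub_nonpos.2 (cot_le_inv ht.1 ht.2)

lemma tendsto_two_mul_antideriv_cos_sub :
    Tendsto (fun θ => 2 * antideriv (cos θ) - 1 / (2 * θ)) (𝓝[>] 0) (𝓝 (π / 4)) := by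
  have hlin : Tendsto (fun θ : ℝ => π / 4 - θ / 2) (𝓝[>] 0) (𝓝 (π / 4)) :=
    ((by fun_prop : Continuous fun θ : ℝ => π / 4 - θ / 2).tendsto' 0 _ (by simp)).mono_left
      nhdsWithin_le_nhds
  have hlim := (tendsto_cot_sub_inv_nhdsGT_zero.const_mul (1 / 2)).add hlin
  rw [mul_zero, zero_add] at hlim
  refine hlim.congr' ?_
  filter_upwards [Ioo_mem_nhdsGT pi_pos] with θ hθ
  rw [antideriv_cos hθ.1.le hθ.2.le]
  field_simp
  ring

lemma tendsto_arccos_one_sub_nhdsGT_zero :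
    Tendsto (fun e => arccos (1 - e)) (𝓝[>] 0) (𝓝[>] 0) := by
  refine tendsto_nhdsWithin_iff.2 ⟨?_, ?_⟩
  · exact ((continuous_arccos.comp (continuous_sub_left 1)).tendsto' 0 0 (by simp)).mono_left
      nhdsWithin_le_nhds
  · filter_upwards [self_mem_nhdsWithin] with e (he : 0 < e)
    exact arccos_pos.2 (by linarith)

theorem integral_and_limit (ε' : ℝ) (hε' : 0 < ε') (hε1 : ε' < 1) :
    (∫ z in (-1 + ε')..(1 - ε'), (1 / 4) * (2 - z ^ 2) / (1 - z ^ 2) ^ ((3:ℝ) / 2)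
        = (1 / 2) * ((1 - ε') / Real.sqrt (1 - (1 - ε') ^ 2) + Real.arcsin (1 - ε'))) ∧
      Filter.Tendsto
        (fun e : ℝ =>
          (∫ z in (-1 + e)..(1 - e), (1 / 4) * (2 - z ^ 2) / (1 - z ^ 2) ^ ((3:ℝ) / 2)) -
            1 / (2 * (π / 2 - Real.arcsin (1 - e))))
        (𝓝[>] 0) (𝓝 (π / 4)) := by
  have hint (e : ℝ) (he : 0 < e) (he' : e < 1) :
      ∫ z in (-1 + e)..(1 - e), (1 / 4) * (2 - z ^ 2) / (1 - z ^ 2) ^ ((3:ℝ) / 2)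
        = 2 * antideriv (1 - e) := by
    rw [show -1 + e = -(1 - e) by ring]
    exact integral_symm_eq_two_mul_antideriv (abs_lt.2 ⟨by linarith, by linarith⟩)
  refine ⟨by rw [hint ε' hε' hε1, antideriv]; ring, ?_⟩
  refine (tendsto_two_mul_antideriv_cos_sub.comp tendsto_arccos_one_sub_nhdsGT_zero).congr' ?_
  filter_upwards [Ioo_mem_nhdsGT one_pos] with e he
  rw [Function.comp_apply, hint e he.1 he.2, ← arccos_eq_pi_div_two_sub_arcsin,
    cos_arccos (by linarith [he.2]) (by linarith [he.1])]
end

section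
/- Suppose f: (0,∞) → ℝ satisfies f(t) = C·t^{-q/2}(1 + o(1)) as t → 0⁺ where f(t) = ∑_{m} e^{-λ_m t} for a nondecreasing sequence 0 ≤ λ₀ ≤ λ₁ ≤ ... tending to infinity, C > 0, q > 0. Then the counting function N(λ) = #{m : λ_m ≤ λ} satisfies N(λ) ~ (C/Γ(q/2 + 1)) λ^{q/2} as λ → ∞. -/
/-!
Write `p = q / 2`. Evaluating `g` at the points `e^{-λₘ t} ∈ (0, 1]`, the hypothesis gives, for
`g(x) = xᵏ`,
`t^p ∑ₘ e^{-λₘ t} g(e^{-λₘ t}) → C (k+1)^{-p} = C / Γ(p) · ∫₀^∞ e^{-s} g(e^{-s}) s^{p-1} ds`,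
so by linearity the same holds for every polynomial `g`. For `g(x) = x⁻¹ 𝟙[e⁻¹ ≤ x]` the sum
counts the `λₘ ≤ 1/t`, and the integral is `∫₀¹ s^{p-1} ds = 1/p`, which gives the constant
`C / (p Γ(p)) = C / Γ(p+1)`. Both sides are monotone in `g`, so it suffices to squeeze this
`g` between polynomials whose integrals are close to `1/p`: first between continuous functions,
by dominated convergence since the jump is a single point, then between polynomials, by
Weierstrass, since `e^{-s} s^{p-1}` has finite integral.
-/

open Real Filter Topology MeasureTheory Set Polynomial

namespace Karamata

noncomputable def gammaTransform (p : ℝ) (g : ℝ → ℝ) : ℝ :=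
  ∫ s in Ioi 0, exp (-s) * g (exp (-s)) * s ^ (p - 1)

noncomputable def thetaSum (l : ℕ → ℝ) (t : ℝ) (g : ℝ → ℝ) : ℝ :=
  ∑' m, exp (-l m * t) * g (exp (-l m * t))

noncomputable def invRamp (u v x : ℝ) : ℝ :=
  max 0 (min 1 ((x - u) / (v - u))) / max x u

lemma exp_neg_mem_Ioc {s : ℝ} (hs : 0 ≤ s) : exp (-s) ∈ Ioc (0 : ℝ) 1 :=
  ⟨exp_pos _, exp_le_one_iff.2 (neg_nonpos.2 hs)⟩

lemma exp_neg_mul_mem_Ioc {a t : ℝ} (ha : 0 ≤ a) (ht : 0 ≤ t) : exp (-a * t) ∈ Ioc (0 : ℝ) 1 :=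
  ⟨exp_pos _, exp_le_one_iff.2 (mul_nonpos_of_nonpos_of_nonneg (neg_nonpos.2 ha) ht)⟩

lemma exists_abs_le_of_continuous {g : ℝ → ℝ} (hg : Continuous g) :
    ∃ M, ∀ x ∈ Ioc (0 : ℝ) 1, |g x| ≤ M := by
  obtain ⟨M, hM⟩ := isCompact_Icc.exists_bound_of_continuousOn (hg.continuousOn (s := Icc 0 1))
  exact ⟨M, fun x hx => hM x (Ioc_subset_Icc_self hx)⟩

lemma abs_indicator_inv_le {a : ℝ} (ha : 0 < a) (x : ℝ) :
    |(Ici a).indicator (fun x : ℝ => x⁻¹) x| ≤ a⁻¹ := by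
  by_cases hx : a ≤ x
  · rw [indicator_of_mem (mem_Ici.2 hx), abs_of_pos (inv_pos.2 (ha.trans_le hx))]
    exact inv_anti₀ ha hx
  · rw [indicator_of_notMem (mt mem_Ici.1 hx), abs_zero]
    exact (inv_pos.2 ha).le

section gammaTransform

variable {p : ℝ}

lemma norm_gammaIntegrand_le {g : ℝ → ℝ} {M s : ℝ} (hs : 0 < s)
    (hM : ∀ x ∈ Ioc (0 : ℝ) 1, |g x| ≤ M) :
    ‖exp (-s) * g (exp (-s)) * s ^ (p - 1)‖ ≤ M * (exp (-s) * s ^ (p - 1)) := by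
  have hw : 0 ≤ exp (-s) * s ^ (p - 1) := mul_nonneg (exp_pos _).le (rpow_nonneg hs.le _)
  have := mul_le_mul_of_nonneg_right (hM _ (exp_neg_mem_Ioc hs.le)) hw
  rw [Real.norm_eq_abs, abs_mul, abs_mul, abs_of_pos (exp_pos _),
    abs_of_nonneg (rpow_nonneg hs.le _)]
  linarith

lemma integrableOn_gammaIntegrand (hp : 0 < p) {g : ℝ → ℝ} (hg : Continuous g) :
    IntegrableOn (fun s => exp (-s) * g (exp (-s)) * s ^ (p - 1)) (Ioi 0) := by
  obtain ⟨M, hM⟩ := exists_abs_le_of_continuous hg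
  refine ((GammaIntegral_convergent hp).const_mul M).mono' ?_ ?_
  · exact (by fun_prop : Measurable fun s => exp (-s) * g (exp (-s)) * s ^ (p - 1))
      |>.aestronglyMeasurable
  · filter_upwards [ae_restrict_mem measurableSet_Ioi] with s hs
    exact norm_gammaIntegrand_le hs hM

lemma gammaTransform_add (hp : 0 < p) {g h : ℝ → ℝ} (hg : Continuous g) (hh : Continuous h) :
    gammaTransform p (fun x => g x + h x) = gammaTransform p g + gammaTransform p h := by
  rw [gammaTransform, gammaTransform, gammaTransform,
    ← integral_add (integrableOn_gammaIntegrand hp hg) (integrableOn_gammaIntegrand hp hh)]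
  congr 1 with s
  ring

lemma gammaTransform_const_mul (c : ℝ) (g : ℝ → ℝ) :
    gammaTransform p (fun x => c * g x) = c * gammaTransform p g := by
  rw [gammaTransform, gammaTransform, ← integral_const_mul]
  congr 1 with s
  ring

lemma gammaTransform_neg (g : ℝ → ℝ) :
    gammaTransform p (fun x => -g x) = -gammaTransform p g := by
  simpa using gammaTransform_const_mul (p := p) (-1) g

lemma gammaTransform_const (hp : 0 < p) (c : ℝ) :
    gammaTransform p (fun _ => c) = c * Gamma p := by
  rw [gammaTransform, Gamma_eq_integral hp, ← integral_const_mul]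
  congr 1 with s
  ring

lemma gammaTransform_add_const (hp : 0 < p) {g : ℝ → ℝ} (hg : Continuous g) (c : ℝ) :
    gammaTransform p (fun x => g x + c) = gammaTransform p g + c * Gamma p := by
  rw [gammaTransform_add hp hg continuous_const, gammaTransform_const hp]

lemma gammaTransform_pow (hp : 0 < p) (k : ℕ) :
    gammaTransform p (fun x => x ^ k) = Gamma p * ((k : ℝ) + 1) ^ (-p) := by
  have hk : (0 : ℝ) < k + 1 := by positivity
  have h : ∀ s : ℝ, exp (-s) * exp (-s) ^ k * s ^ (p - 1) = s ^ (p - 1) * exp (-((k + 1) * s)) := by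
    intro s
    rw [← exp_nat_mul, ← exp_add]
    ring_nf
  simp_rw [gammaTransform, h]
  rw [integral_rpow_mul_exp_neg_mul_Ioi hp hk, one_div, inv_rpow hk.le, ← rpow_neg hk.le, mul_comm]

lemma gammaTransform_mono (hp : 0 < p) {g h : ℝ → ℝ} (hg : Continuous g) (hh : Continuous h)
    (hgh : ∀ x ∈ Ioc (0 : ℝ) 1, g x ≤ h x) : gammaTransform p g ≤ gammaTransform p h :=
  setIntegral_mono_on (integrableOn_gammaIntegrand hp hg) (integrableOn_gammaIntegrand hp hh)
    measurableSet_Ioi fun _ hs => mul_le_mul_of_nonneg_right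
      (mul_le_mul_of_nonneg_left (hgh _ (exp_neg_mem_Ioc (le_of_lt hs))) (exp_pos _).le)
      (rpow_nonneg (le_of_lt hs) _)

lemma gammaTransform_indicator_inv_exp_neg_one (hp : 0 < p) :
    gammaTransform p ((Ici (exp (-1))).indicator fun x => x⁻¹) = 1 / p := by
  have h : EqOn (fun s => exp (-s) * (Ici (exp (-1))).indicator (fun x => x⁻¹) (exp (-s)) *
      s ^ (p - 1)) ((Iic 1).indicator fun s => s ^ (p - 1)) (Ioi 0) := by
    intro s _
    simp only [indicator_apply, mem_Ici, mem_Iic, exp_le_exp, neg_le_neg_iff]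
    split_ifs
    · rw [mul_inv_cancel₀ (exp_pos _).ne', one_mul]
    · rw [mul_zero, zero_mul]
  rw [gammaTransform, setIntegral_congr_fun measurableSet_Ioi h,
    setIntegral_indicator measurableSet_Iic, Ioi_inter_Iic,
    ← intervalIntegral.integral_of_le zero_le_one, integral_rpow (Or.inl (by linarith))]
  simp [hp.ne']

end gammaTransform

section invRamp

variable {u v x : ℝ}

lemma continuous_invRamp (hu : 0 < u) : Continuous (invRamp u v) :=
  Continuous.div (by fun_prop) (by fun_prop) fun x => (hu.trans_le (le_max_right x u)).ne'

lemma invRamp_nonneg (hu : 0 < u) : 0 ≤ invRamp u v x :=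
  div_nonneg (le_max_left _ _) (hu.le.trans (le_max_right _ _))

lemma invRamp_le_inv_of_le {w : ℝ} (hw : 0 < w) (hwx : w ≤ max x u) : invRamp u v x ≤ w⁻¹ := by
  rw [invRamp, div_eq_mul_inv]
  exact (mul_le_of_le_one_left (inv_nonneg.2 (hw.le.trans hwx))
    (max_le zero_le_one (min_le_left _ _))).trans (inv_anti₀ hw hwx)

lemma invRamp_of_le (huv : u < v) (hx : x ≤ u) : invRamp u v x = 0 := by
  have : (x - u) / (v - u) ≤ 0 := div_nonpos_of_nonpos_of_nonneg (by linarith) (by linarith)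
  rw [invRamp, max_eq_left ((min_le_right _ _).trans this), zero_div]

lemma invRamp_of_ge (huv : u < v) (hx : v ≤ x) : invRamp u v x = x⁻¹ := by
  have : 1 ≤ (x - u) / (v - u) := (one_le_div (by linarith)).2 (by linarith)
  rw [invRamp, min_eq_left this, max_eq_right zero_le_one, max_eq_left (by linarith), one_div]

lemma indicator_inv_le_invRamp {a : ℝ} (hu : 0 < u) (huv : u < v) (hva : v ≤ a) :
    (Ici a).indicator (fun x : ℝ => x⁻¹) x ≤ invRamp u v x := by
  by_cases hx : a ≤ x
  · rw [indicator_of_mem (mem_Ici.2 hx), invRamp_of_ge huv (hva.trans hx)]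
  · rw [indicator_of_notMem (mt mem_Ici.1 hx)]
    exact invRamp_nonneg hu

lemma invRamp_le_indicator_inv {a : ℝ} (hx : 0 < x) (huv : u < v) (hau : a ≤ u) :
    invRamp u v x ≤ (Ici a).indicator (fun x : ℝ => x⁻¹) x := by
  by_cases hax : a ≤ x
  · rw [indicator_of_mem (mem_Ici.2 hax)]
    exact invRamp_le_inv_of_le hx (le_max_left _ _)
  · rw [indicator_of_notMem (mt mem_Ici.1 hax), invRamp_of_le huv (by linarith [not_le.1 hax])]

lemma eventually_invRamp_eq_indicator_inv {ι : Type*} {l : Filter ι} {u v : ι → ℝ} {a : ℝ}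
    (hu : Tendsto u l (𝓝 a)) (hv : Tendsto v l (𝓝 a)) (huv : ∀ᶠ i in l, u i < v i)
    (hx : x ≠ a) : ∀ᶠ i in l, invRamp (u i) (v i) x = (Ici a).indicator (fun x : ℝ => x⁻¹) x := by
  rcases hx.lt_or_gt with hxa | hax
  · filter_upwards [huv, hu.eventually (lt_mem_nhds hxa)] with i huvi hxu
    rw [invRamp_of_le huvi hxu.le, indicator_of_notMem (mt mem_Ici.1 (not_le.2 hxa))]
  · filter_upwards [huv, hv.eventually (gt_mem_nhds hax)] with i huvi hvx
    rw [invRamp_of_ge huvi hvx.le, indicator_of_mem (mem_Ici.2 hax.le)]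

end invRamp

section approximation

variable {p : ℝ}

lemma tendsto_gammaTransform_invRamp (hp : 0 < p) {ι : Type*} {l : Filter ι}
    [l.IsCountablyGenerated] {u v : ι → ℝ} {a : ℝ} (ha : 0 < a) (hu : Tendsto u l (𝓝 a))
    (hv : Tendsto v l (𝓝 a)) (huv : ∀ᶠ i in l, u i < v i) :
    Tendsto (fun i => gammaTransform p (invRamp (u i) (v i))) l
      (𝓝 (gammaTransform p ((Ici a).indicator fun x => x⁻¹))) := by
  have hu_pos : ∀ᶠ i in l, a / 2 < u i := hu.eventually (lt_mem_nhds (half_lt_self ha))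
  have h_ne : ∀ᵐ s ∂(volume.restrict (Ioi (0 : ℝ))), exp (-s) ≠ a := by
    refine ae_restrict_of_ae (ae_iff.2 (Set.Subsingleton.measure_zero (fun s hs r hr => ?_) _))
    simp only [mem_ofPred_eq, not_not] at hs hr
    simpa using hs.trans hr.symm
  refine tendsto_integral_filter_of_dominated_convergence
    (fun s => (a / 2)⁻¹ * (exp (-s) * s ^ (p - 1))) ?_ ?_
    ((GammaIntegral_convergent hp).const_mul _) ?_
  · filter_upwards [hu_pos] with i hi
    exact (integrableOn_gammaIntegrand hp (continuous_invRamp (by linarith))).aestronglyMeasurable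
  · filter_upwards [hu_pos] with i hi
    filter_upwards [ae_restrict_mem measurableSet_Ioi] with s hs
    refine norm_gammaIntegrand_le hs fun x _ => ?_
    rw [abs_of_nonneg (invRamp_nonneg (by linarith))]
    exact invRamp_le_inv_of_le (half_pos ha) (hi.le.trans (le_max_right _ _))
  · filter_upwards [h_ne] with s hs
    refine tendsto_const_nhds.congr' ?_
    filter_upwards [eventually_invRamp_eq_indicator_inv hu hv huv hs] with i hi
    rw [hi]

lemma exists_polynomial_ge_gammaTransform_lt (hp : 0 < p) {g : ℝ → ℝ} (hg : Continuous g)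
    {b : ℝ} (hb : gammaTransform p g < b) :
    ∃ P : ℝ[X], (∀ x ∈ Ioc (0 : ℝ) 1, g x ≤ P.eval x) ∧ gammaTransform p P.eval < b := by
  have hΓ := Gamma_pos_of_pos hp
  set η := (b - gammaTransform p g) / (4 * Gamma p)
  have hη : 0 < η := div_pos (sub_pos.2 hb) (by positivity)
  obtain ⟨Q, hQ⟩ := exists_polynomial_near_of_continuousOn 0 1 g hg.continuousOn η hη
  have hQ' : ∀ x ∈ Ioc (0 : ℝ) 1, g x - η < Q.eval x ∧ Q.eval x < g x + η := fun x hx => by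
    have := abs_lt.1 (hQ x (Ioc_subset_Icc_self hx))
    constructor <;> linarith
  refine ⟨Q + Polynomial.C η, fun x hx => ?_, ?_⟩
  · rw [eval_add, eval_C]
    linarith [hQ' x hx]
  · calc gammaTransform p (Q + Polynomial.C η).eval
        ≤ gammaTransform p (fun x => g x + 2 * η) :=
          gammaTransform_mono hp (Q + Polynomial.C η).continuous (by fun_prop) fun x hx => by
            rw [eval_add, eval_C]
            linarith [hQ' x hx]
      _ = gammaTransform p g + 2 * η * Gamma p := gammaTransform_add_const hp hg _
      _ < b := by
          have : 2 * η * Gamma p = (b - gammaTransform p g) / 2 := by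
            simp only [η]
            field_simp
            ring
          linarith

lemma exists_polynomial_le_gammaTransform_gt (hp : 0 < p) {g : ℝ → ℝ} (hg : Continuous g)
    {b : ℝ} (hb : b < gammaTransform p g) :
    ∃ P : ℝ[X], (∀ x ∈ Ioc (0 : ℝ) 1, P.eval x ≤ g x) ∧ b < gammaTransform p P.eval := by
  obtain ⟨P, hgP, hPb⟩ := exists_polynomial_ge_gammaTransform_lt hp (g := fun x => -g x) hg.neg (b := -b)
    (by rw [gammaTransform_neg]; linarith)
  refine ⟨-P, fun x hx => ?_, ?_⟩
  · rw [eval_neg]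
    linarith [hgP x hx]
  · simp only [eval_neg, gammaTransform_neg]
    linarith

lemma exists_polynomial_ge_indicator_inv (hp : 0 < p) {a b : ℝ} (ha : 0 < a)
    (hb : gammaTransform p ((Ici a).indicator fun x => x⁻¹) < b) :
    ∃ P : ℝ[X], (∀ x ∈ Ioc (0 : ℝ) 1, (Ici a).indicator (fun x => x⁻¹) x ≤ P.eval x) ∧
      gammaTransform p P.eval < b := by
  have hlim := tendsto_gammaTransform_invRamp hp (l := 𝓝[>] 0) (u := fun δ => a - δ)
    (v := fun _ => a) ha (((continuous_sub_left a).tendsto' 0 a (sub_zero a)).mono_left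
      nhdsWithin_le_nhds) tendsto_const_nhds
    (eventually_mem_nhdsWithin.mono fun δ hδ => sub_lt_self a hδ)
  obtain ⟨δ, hδb, hδ⟩ := ((hlim.eventually_lt_const hb).and (Ioo_mem_nhdsGT ha)).exists
  obtain ⟨P, hgP, hPb⟩ :=
    exists_polynomial_ge_gammaTransform_lt hp (continuous_invRamp (sub_pos.2 hδ.2)) hδb
  exact ⟨P, fun x hx => (indicator_inv_le_invRamp (sub_pos.2 hδ.2) (sub_lt_self a hδ.1)
    le_rfl).trans (hgP x hx), hPb⟩

lemma exists_polynomial_le_indicator_inv (hp : 0 < p) {a b : ℝ} (ha : 0 < a)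
    (hb : b < gammaTransform p ((Ici a).indicator fun x => x⁻¹)) :
    ∃ P : ℝ[X], (∀ x ∈ Ioc (0 : ℝ) 1, P.eval x ≤ (Ici a).indicator (fun x => x⁻¹) x) ∧
      b < gammaTransform p P.eval := by
  have hlim := tendsto_gammaTransform_invRamp hp (l := 𝓝[>] 0) (u := fun _ => a)
    (v := fun δ => a + δ) ha tendsto_const_nhds
    (((continuous_const_add a).tendsto' 0 a (add_zero a)).mono_left nhdsWithin_le_nhds)
    (eventually_mem_nhdsWithin.mono fun δ hδ => lt_add_of_pos_right a hδ)
  obtain ⟨δ, hδb, hδ⟩ := ((hlim.eventually_const_lt hb).and self_mem_nhdsWithin).exists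
  obtain ⟨P, hPg, hbP⟩ := exists_polynomial_le_gammaTransform_gt hp (continuous_invRamp ha) hδb
  exact ⟨P, fun x hx => (hPg x hx).trans
    (invRamp_le_indicator_inv hx.1 (lt_add_of_pos_right a hδ) le_rfl), hbP⟩

end approximation

section thetaSum

variable {l : ℕ → ℝ} {t : ℝ}

lemma summable_thetaSummand (hl : ∀ m, 0 ≤ l m) (hs : Summable fun m => exp (-l m * t))
    (ht : 0 < t) {g : ℝ → ℝ} {M : ℝ} (hM : ∀ x ∈ Ioc (0 : ℝ) 1, |g x| ≤ M) :
    Summable fun m => exp (-l m * t) * g (exp (-l m * t)) := by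
  refine (hs.mul_left M).of_norm_bounded fun m => ?_
  have hx := exp_neg_mul_mem_Ioc (hl m) ht.le
  rw [norm_mul, norm_of_nonneg hx.1.le, Real.norm_eq_abs, mul_comm M]
  exact mul_le_mul_of_nonneg_left (hM _ hx) hx.1.le

lemma thetaSum_mono (hl : ∀ m, 0 ≤ l m) (hs : Summable fun m => exp (-l m * t)) (ht : 0 < t)
    {g h : ℝ → ℝ} {M N : ℝ} (hM : ∀ x ∈ Ioc (0 : ℝ) 1, |g x| ≤ M)
    (hN : ∀ x ∈ Ioc (0 : ℝ) 1, |h x| ≤ N) (hgh : ∀ x ∈ Ioc (0 : ℝ) 1, g x ≤ h x) :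
    thetaSum l t g ≤ thetaSum l t h :=
  (summable_thetaSummand hl hs ht hM).tsum_le_tsum (fun m => mul_le_mul_of_nonneg_left
    (hgh _ (exp_neg_mul_mem_Ioc (hl m) ht.le)) (exp_pos _).le) (summable_thetaSummand hl hs ht hN)

lemma thetaSum_add (hl : ∀ m, 0 ≤ l m) (hs : Summable fun m => exp (-l m * t)) (ht : 0 < t)
    {g h : ℝ → ℝ} (hg : Continuous g) (hh : Continuous h) :
    thetaSum l t (fun x => g x + h x) = thetaSum l t g + thetaSum l t h := by
  obtain ⟨M, hM⟩ := exists_abs_le_of_continuous hg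
  obtain ⟨N, hN⟩ := exists_abs_le_of_continuous hh
  rw [thetaSum, thetaSum, thetaSum,
    ← (summable_thetaSummand hl hs ht hM).tsum_add (summable_thetaSummand hl hs ht hN)]
  simp only [mul_add]

lemma thetaSum_const_mul (c : ℝ) (g : ℝ → ℝ) :
    thetaSum l t (fun x => c * g x) = c * thetaSum l t g := by
  rw [thetaSum, thetaSum, ← tsum_mul_left]
  congr 1 with m
  ring

lemma thetaSum_pow (k : ℕ) :
    thetaSum l t (fun x => x ^ k) = ∑' m, exp (-l m * ((k + 1) * t)) := by
  rw [thetaSum]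
  congr 1 with m
  rw [← exp_nat_mul, ← exp_add]
  ring_nf

lemma thetaSum_indicator_inv_exp_neg_one (ht : 0 < t) :
    thetaSum l t ((Ici (exp (-1))).indicator fun x => x⁻¹) = Nat.card {m | l m ≤ t⁻¹} := by
  have h : ∀ m, exp (-l m * t) * (Ici (exp (-1))).indicator (fun x => x⁻¹) (exp (-l m * t)) =
      {m | l m ≤ t⁻¹}.indicator 1 m := by
    intro m
    have hiff : exp (-1) ≤ exp (-l m * t) ↔ l m ≤ t⁻¹ := by
      rw [exp_le_exp, neg_mul, neg_le_neg_iff, ← one_div, le_div_iff₀ ht]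
    simp only [indicator_apply, mem_Ici, mem_ofPred_eq, hiff, Pi.one_apply]
    split_ifs
    · exact mul_inv_cancel₀ (exp_pos _).ne'
    · exact mul_zero _
  rw [thetaSum, tsum_congr h, ← tsum_subtype]
  simp

variable {p C : ℝ}

lemma tendsto_rpow_mul_thetaSum_pow
    (hasym : Tendsto (fun t => (∑' m, exp (-l m * t)) * t ^ p) (𝓝[>] 0) (𝓝 C)) (k : ℕ) :
    Tendsto (fun t => t ^ p * thetaSum l t (fun x => x ^ k)) (𝓝[>] 0)
      (𝓝 (C * ((k : ℝ) + 1) ^ (-p))) := by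
  have hk : (0 : ℝ) < k + 1 := by positivity
  have hscale : Tendsto (fun t => ((k : ℝ) + 1) * t) (𝓝[>] 0) (𝓝[>] 0) :=
    tendsto_nhdsWithin_iff.2 ⟨((continuous_const_mul _).tendsto' 0 0 (mul_zero _)).mono_left
      nhdsWithin_le_nhds, eventually_mem_nhdsWithin.mono fun t ht => mul_pos hk ht⟩
  refine ((hasym.comp hscale).mul_const (((k : ℝ) + 1) ^ (-p))).congr' ?_
  filter_upwards [self_mem_nhdsWithin] with t ht
  rw [Function.comp_apply, thetaSum_pow, mul_rpow hk.le (le_of_lt ht), rpow_neg hk.le]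
  generalize ∑' m, exp (-l m * ((k + 1) * t)) = S
  field_simp

lemma tendsto_rpow_mul_thetaSum_polynomial (hp : 0 < p) (hl : ∀ m, 0 ≤ l m)
    (hsum : ∀ t : ℝ, 0 < t → Summable fun m => exp (-l m * t))
    (hasym : Tendsto (fun t => (∑' m, exp (-l m * t)) * t ^ p) (𝓝[>] 0) (𝓝 C)) (P : ℝ[X]) :
    Tendsto (fun t => t ^ p * thetaSum l t P.eval) (𝓝[>] 0)
      (𝓝 (C / Gamma p * gammaTransform p P.eval)) := by
  induction P using Polynomial.induction_on' with
  | add P Q hP hQ =>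
    have hPQ := gammaTransform_add hp P.continuous Q.continuous
    simp only [← eval_add] at hPQ
    rw [hPQ, mul_add]
    refine (hP.add hQ).congr' ?_
    filter_upwards [self_mem_nhdsWithin] with t ht
    simp only [eval_add, thetaSum_add hl (hsum t ht) ht P.continuous Q.continuous, mul_add]
  | monomial k c =>
    simp only [eval_monomial, thetaSum_const_mul, gammaTransform_const_mul, gammaTransform_pow hp]
    convert (tendsto_rpow_mul_thetaSum_pow hasym k).const_mul c using 1
    · ext t
      ring
    · field_simp [(Gamma_pos_of_pos hp).ne']

theorem tendsto_rpow_mul_thetaSum_indicator_inv (hp : 0 < p) (hC : 0 < C) {a : ℝ} (ha : 0 < a)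
    (hl : ∀ m, 0 ≤ l m) (hsum : ∀ t : ℝ, 0 < t → Summable fun m => exp (-l m * t))
    (hasym : Tendsto (fun t => (∑' m, exp (-l m * t)) * t ^ p) (𝓝[>] 0) (𝓝 C)) :
    Tendsto (fun t => t ^ p * thetaSum l t ((Ici a).indicator fun x => x⁻¹)) (𝓝[>] 0)
      (𝓝 (C / Gamma p * gammaTransform p ((Ici a).indicator fun x => x⁻¹))) := by
  have hK : 0 < C / Gamma p := div_pos hC (Gamma_pos_of_pos hp)
  rw [tendsto_order]
  constructor
  · intro b hb
    obtain ⟨P, hPg, hbP⟩ := exists_polynomial_le_indicator_inv hp (b := b / (C / Gamma p)) ha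
      (by rwa [div_lt_iff₀' hK])
    obtain ⟨M, hM⟩ := exists_abs_le_of_continuous P.continuous
    filter_upwards [(tendsto_rpow_mul_thetaSum_polynomial hp hl hsum hasym P).eventually_const_lt
      (by rwa [div_lt_iff₀' hK] at hbP), self_mem_nhdsWithin] with t hbt ht
    exact hbt.trans_le (mul_le_mul_of_nonneg_left
      (thetaSum_mono hl (hsum t ht) ht hM (fun x _ => abs_indicator_inv_le ha x) hPg)
      (rpow_nonneg (le_of_lt ht) p))
  · intro b hb
    obtain ⟨P, hgP, hPb⟩ := exists_polynomial_ge_indicator_inv hp (b := b / (C / Gamma p)) ha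
      (by rwa [lt_div_iff₀' hK])
    obtain ⟨M, hM⟩ := exists_abs_le_of_continuous P.continuous
    filter_upwards [(tendsto_rpow_mul_thetaSum_polynomial hp hl hsum hasym P).eventually_lt_const
      (by rwa [lt_div_iff₀' hK] at hPb), self_mem_nhdsWithin] with t hbt ht
    exact (mul_le_mul_of_nonneg_left
      (thetaSum_mono hl (hsum t ht) ht (fun x _ => abs_indicator_inv_le ha x) hM hgP)
      (rpow_nonneg (le_of_lt ht) p)).trans_lt hbt

end thetaSum

end Karamata

open Karamata

theorem karamata_weyl_general (l : ℕ → ℝ) (hmono : Monotone l) (h0 : 0 ≤ l 0)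
    (C q : ℝ) (hC : 0 < C) (hq : 0 < q)
    (hsum : ∀ t : ℝ, 0 < t → Summable fun m : ℕ => Real.exp (-l m * t))
    (hasym : Filter.Tendsto
      (fun t : ℝ => (∑' m : ℕ, Real.exp (-l m * t)) * t ^ (q / 2))
      (𝓝[>] 0) (𝓝 C)) :
    Filter.Tendsto
      (fun x : ℝ => (Nat.card {m : ℕ | l m ≤ x} : ℝ) / x ^ (q / 2))
      Filter.atTop (𝓝 (C / Real.Gamma (q / 2 + 1))) := by
  have hp : 0 < q / 2 := half_pos hq
  have hl : ∀ m, 0 ≤ l m := fun m => h0.trans (hmono m.zero_le)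
  have hlim := tendsto_rpow_mul_thetaSum_indicator_inv hp hC (exp_pos (-1)) hl hsum hasym
  have hconst : C / Gamma (q / 2) * (1 / (q / 2)) = C / Gamma (q / 2 + 1) := by
    rw [Gamma_add_one hp.ne']
    field_simp
  rw [gammaTransform_indicator_inv_exp_neg_one hp, hconst] at hlim
  refine (hlim.comp tendsto_inv_atTop_nhdsGT_zero).congr' ?_
  filter_upwards [eventually_gt_atTop 0] with x hx
  rw [Function.comp_apply, thetaSum_indicator_inv_exp_neg_one (inv_pos.2 hx), inv_inv,
    inv_rpow hx.le, inv_mul_eq_div]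

theorem karamata_weyl (l : ℕ → ℝ) (hmono : Monotone l) (h0 : 0 ≤ l 0)
    (htop : Filter.Tendsto l Filter.atTop Filter.atTop)
    (C q : ℝ) (hC : 0 < C) (hq : 0 < q)
    (hsum : ∀ t : ℝ, 0 < t → Summable fun m : ℕ => Real.exp (-l m * t))
    (hasym : Filter.Tendsto
      (fun t : ℝ => (∑' m : ℕ, Real.exp (-l m * t)) * t ^ (q / 2))
      (𝓝[>] 0) (𝓝 C)) :
    Filter.Tendsto
      (fun x : ℝ => (Nat.card {m : ℕ | l m ≤ x} : ℝ) / x ^ (q / 2))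
      Filter.atTop (𝓝 (C / Real.Gamma (q / 2 + 1))) :=
  karamata_weyl_general l hmono h0 C q hC hq hsum hasym
end
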